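/- Let f : B → B' and g : A' → B' be homomorphisms of commutative rings and A := B ×_{B'} A' the fiber product ring. Let a = (b, a') ∈ A and let b' := f(b) = g(a') ∈ B'. Then the natural ring homomorphism from the localization A_a of A away from a to the fiber product ring B_b ×_{B'_{b'}} A'_{a'} of the localizations away from b, b', a' (with respect to the induced maps B_b → B'_{b'} and A'_{a'} → B'_{b'}) is an isomorphism. -/

import Mathlib

/-- The fiber product ring `B ×_{B'} A'` of two ring homomorphisms `f : B →+* B'` and
`g : A' →+* B'`, realized as the subring `{(b, a') | f b = g a'}` of `B × A'`. -/
def fiberProd {B A' B' : Type} [CommRing B] [CommRing A'] [CommRing B']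
    (f : B →+* B') (g : A' →+* B') : Subring (B × A') :=
  RingHom.eqLocus (f.comp (RingHom.fst B A')) (g.comp (RingHom.snd B A'))

/-- The first projection `pr₁ : B ×_{B'} A' →+* B`. -/
def fiberProdFst {B A' B' : Type} [CommRing B] [CommRing A'] [CommRing B']
    (f : B →+* B') (g : A' →+* B') : fiberProd f g →+* B :=
  (RingHom.fst B A').comp (fiberProd f g).subtype

/-- The second projection `pr₂ : B ×_{B'} A' →+* A'`. -/
def fiberProdSnd {B A' B' : Type} [CommRing B] [CommRing A'] [CommRing B']
    (f : B →+* B') (g : A' →+* B') : fiberProd f g →+* A' :=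
  (RingHom.snd B A').comp (fiberProd f g).subtype

/-!
An element `(x, y)` of `B_b ×_{B'_{b'}} A'_{a'}` becomes, after multiplication by a common power
of `a = (b, a')`, a pair `(b₀, a₀)` coming from `B × A'`. Its two images in `B'_{b'}` agree, so
`f b₀` and `g a₀` agree in `B'` after multiplication by a power of `b' = g a'`; multiplying by the
corresponding power of `a` produces an element of `A`. Injectivity up to powers of `a` is checked
componentwise.
-/

namespace fiberProd

section Map

variable {B A' B' C D C' : Type} [CommRing B] [CommRing A'] [CommRing B'] [CommRing C]
  [CommRing D] [CommRing C'] {f : B →+* B'} {g : A' →+* B'} {u : C →+* C'} {v : D →+* C'}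

theorem isUnit_of_isUnit_fst_snd {p : fiberProd u v} (h₁ : IsUnit p.1.1) (h₂ : IsUnit p.1.2) :
    IsUnit p := by
  obtain ⟨x, hx⟩ := h₁
  obtain ⟨y, hy⟩ := h₂
  have hxy : Units.map (u : C →* C') x = Units.map (v : D →* C') y := by
    ext
    simp only [Units.coe_map, MonoidHom.coe_coe, hx, hy]
    exact p.2
  have hmem : ((↑x⁻¹ : C), (↑y⁻¹ : D)) ∈ fiberProd u v := by
    show u ↑x⁻¹ = v ↑y⁻¹
    simpa [map_units_inv] using congrArg (fun w => ((w⁻¹ : C'ˣ) : C')) hxy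
  refine .of_mul_eq_one ⟨_, hmem⟩ (Subtype.ext (Prod.ext ?_ ?_))
  · simp [← hx]
  · simp [← hy]

variable (f g) {β : B →+* C} {α : A' →+* D} {γ : B' →+* C'}

def map (hu : u.comp β = γ.comp f) (hv : v.comp α = γ.comp g) : fiberProd f g →+* fiberProd u v :=
  ((β.prodMap α).comp (fiberProd f g).subtype).codRestrict _ fun p => by
    show u (β p.1.1) = v (α p.1.2)
    rw [← RingHom.comp_apply, hu, ← RingHom.comp_apply v, hv]
    exact congrArg γ p.2

variable {f g} (hu : u.comp β = γ.comp f) (hv : v.comp α = γ.comp g)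

@[simp]
theorem coe_map (p : fiberProd f g) : (map f g hu hv p : C × D) = (β p.1.1, α p.1.2) :=
  rfl

theorem coe_map_pow (p : fiberProd f g) (n : ℕ) :
    ((map f g hu hv p ^ n : fiberProd u v) : C × D) = (β p.1.1 ^ n, α p.1.2 ^ n) := by
  rw [SubmonoidClass.coe_pow, coe_map]
  rfl

end Map

section Away

variable {B A' B' Bb A'a B'b : Type} [CommRing B] [CommRing A'] [CommRing B']
  [CommRing Bb] [CommRing A'a] [CommRing B'b] [Algebra B Bb] [Algebra A' A'a] [Algebra B' B'b]
  {f : B →+* B'} {g : A' →+* B'} {b : B} {a' : A'}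
  [IsLocalization.Away b Bb] [IsLocalization.Away a' A'a]
  {u : Bb →+* B'b} {v : A'a →+* B'b}
  (hba : f b = g a') (hu : u.comp (algebraMap B Bb) = (algebraMap B' B'b).comp f)
  (hv : v.comp (algebraMap A' A'a) = (algebraMap B' B'b).comp g)

theorem exists_pow_mul_eq_of_map_eq {p q : fiberProd f g} (h : map f g hu hv p = map f g hu hv q) :
    ∃ n : ℕ, (⟨(b, a'), hba⟩ : fiberProd f g) ^ n * p = ⟨(b, a'), hba⟩ ^ n * q := by
  rw [Subtype.ext_iff, coe_map, coe_map, Prod.ext_iff] at h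
  obtain ⟨n, hn⟩ := IsLocalization.Away.exists_of_eq b h.1
  obtain ⟨m, hm⟩ := IsLocalization.Away.exists_of_eq a' h.2
  refine ⟨n + m, Subtype.ext (Prod.ext ?_ ?_)⟩
  · simp [add_comm n m, pow_add, mul_assoc, hn]
  · simp [pow_add, mul_assoc, hm]

theorem exists_mul_map_pow_eq_map [IsLocalization.Away (f b) B'b] (z : fiberProd u v) :
    ∃ (n : ℕ) (p : fiberProd f g), z * map f g hu hv ⟨(b, a'), hba⟩ ^ n = map f g hu hv p := by
  obtain ⟨⟨x, y⟩, hxy⟩ := z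
  change u x = v y at hxy
  obtain ⟨n, b₀, hb₀⟩ := IsLocalization.Away.surj b x
  obtain ⟨m, a₀, ha₀⟩ := IsLocalization.Away.surj a' y
  have hx : x * algebraMap B Bb b ^ (n + m) = algebraMap B Bb (b₀ * b ^ m) := by
    rw [pow_add, ← mul_assoc, hb₀, map_mul, map_pow]
  have hy : y * algebraMap A' A'a a' ^ (n + m) = algebraMap A' A'a (a₀ * a' ^ n) := by
    rw [add_comm, pow_add, ← mul_assoc, ha₀, map_mul, map_pow]
  have hba' : u (algebraMap B Bb b) = v (algebraMap A' A'a a') :=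
    (RingHom.congr_fun hu b).trans ((congrArg _ hba).trans (RingHom.congr_fun hv a').symm)
  have h : algebraMap B' B'b (f (b₀ * b ^ m)) = algebraMap B' B'b (g (a₀ * a' ^ n)) :=
    calc algebraMap B' B'b (f (b₀ * b ^ m)) = u (x * algebraMap B Bb b ^ (n + m)) := by
          rw [hx]; exact (RingHom.congr_fun hu _).symm
      _ = v (y * algebraMap A' A'a a' ^ (n + m)) := by
          rw [map_mul, map_mul, map_pow, map_pow, hxy, hba']
      _ = algebraMap B' B'b (g (a₀ * a' ^ n)) := by
          rw [hy]; exact RingHom.congr_fun hv _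
  obtain ⟨k, hk⟩ := IsLocalization.Away.exists_of_eq (f b) h
  have hmem : (b ^ k * (b₀ * b ^ m), a' ^ k * (a₀ * a' ^ n)) ∈ fiberProd f g := by
    show f (b ^ k * (b₀ * b ^ m)) = g (a' ^ k * (a₀ * a' ^ n))
    simpa only [map_mul, map_pow, ← hba] using hk
  refine ⟨n + m + k, ⟨_, hmem⟩, Subtype.ext (Prod.ext ?_ ?_)⟩
  · rw [MulMemClass.coe_mul, Prod.fst_mul, coe_map_pow]
    show x * algebraMap B Bb b ^ (n + m + k) = algebraMap B Bb (b ^ k * (b₀ * b ^ m))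
    rw [pow_add, ← mul_assoc, hx, ← map_pow, ← map_mul, mul_comm]
  · rw [MulMemClass.coe_mul, Prod.snd_mul, coe_map_pow]
    show y * algebraMap A' A'a a' ^ (n + m + k) = algebraMap A' A'a (a' ^ k * (a₀ * a' ^ n))
    rw [pow_add, ← mul_assoc, hy, ← map_pow, ← map_mul, mul_comm]

theorem isLocalization_away_map [IsLocalization.Away (f b) B'b] :
    letI := (map f g hu hv).toAlgebra
    IsLocalization.Away (⟨(b, a'), hba⟩ : fiberProd f g) (fiberProd u v) :=
  letI := (map f g hu hv).toAlgebra
  IsLocalization.Away.mk _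
    (isUnit_of_isUnit_fst_snd (IsLocalization.Away.algebraMap_isUnit b)
      (IsLocalization.Away.algebraMap_isUnit a'))
    (exists_mul_map_pow_eq_map hba hu hv)
    (fun _ _ => exists_pow_mul_eq_of_map_eq hba hu hv)

end Away

end fiberProd

theorem stmt6 {B A' B' : Type} [CommRing B] [CommRing A'] [CommRing B']
    (f : B →+* B') (g : A' →+* B') (b : B) (a' : A') (hba : f b = g a') :
    letI a : ↥(fiberProd f g) := ⟨(b, a'), hba⟩;
    -- the induced map `B_b → B'_{b'}` on localizations away from `b` resp. `b' = f b`
    letI u : Localization.Away b →+* Localization.Away (f b) := Localization.awayMap f b;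
    -- the induced map `A'_{a'} → B'_{b'}` on localizations away from `a'` resp. `b' = g a'`
    letI v : Localization.Away a' →+* Localization.Away (f b) :=
      letI : IsLocalization.Away (g a') (Localization.Away (f b)) := hba ▸ inferInstance;
      IsLocalization.Away.map (Localization.Away a') (Localization.Away (f b)) g a';
    -- the natural map `A_a → B_b ×_{B'_{b'}} A'_{a'}` is an isomorphism
    ∃ e : Localization.Away a ≃+* ↥(fiberProd u v),
      ∀ x : ↥(fiberProd f g),
        ((e (algebraMap (↥(fiberProd f g)) (Localization.Away a) x) :
            Localization.Away b × Localization.Away a')) =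
          (algebraMap B (Localization.Away b) (fiberProdFst f g x),
           algebraMap A' (Localization.Away a') (fiberProdSnd f g x)) := by
  let _ : IsLocalization.Away (g a') (Localization.Away (f b)) := hba ▸ inferInstance
  let a : fiberProd f g := ⟨(b, a'), hba⟩
  let u := Localization.awayMap f b
  let v := IsLocalization.Away.map (Localization.Away a') (Localization.Away (f b)) g a'
  have hu : u.comp (algebraMap B _) = (algebraMap B' (Localization.Away (f b))).comp f :=
    IsLocalization.map_comp _
  have hv : v.comp (algebraMap A' _) = (algebraMap B' (Localization.Away (f b))).comp g :=
    IsLocalization.map_comp _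
  let _ := (fiberProd.map f g hu hv).toAlgebra
  have := fiberProd.isLocalization_away_map hba hu hv
  let e := IsLocalization.algEquiv (Submonoid.powers a) (Localization.Away a) (fiberProd u v)
  exact ⟨e.toRingEquiv, fun x => congrArg Subtype.val (e.commutes x)⟩
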